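/- arXiv:1909.06568 — 3 statements merged into one kernel-verified Lean document; each statement's English description precedes it below -/
import Mathlib

section
/- Let G be a graph. For all sets S₁ ⊆ S₂ ⊆ V(G), every T ⊆ V(G), and every ℓ ∈ ℕ, the probabilities of the forcing events satisfy P(A(S₁, T, ℓ)) ≤ P(A(S₂, T, ℓ)). -/
open Finset Filter Real
open scoped Classical

namespace PZF

variable {V : Type*} [Fintype V] [DecidableEq V]

/-- The closed degree of `u` into the set `B`, i.e. `|N[u] ∩ B|`. -/
noncomputable def closedDegIn (G : SimpleGraph V) (B : Finset V) (u : V) : ℕ :=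
  ((insert u (G.neighborSet u)) ∩ (B : Set V)).ncard

/-- The degree of `u` in `G`. -/
noncomputable def deg (G : SimpleGraph V) (u : V) : ℕ :=
  (G.neighborSet u).ncard

/-- The probability that the blue vertex `u` forces its white neighbour `v` in one round of
probabilistic zero forcing, when the current blue set is `B`: it equals `|N[u] ∩ B| / deg u`
when `u` is blue, `v` is a white neighbour of `u`, and `0` otherwise. -/
noncomputable def edgeForceProb (G : SimpleGraph V) (B : Finset V) (u v : V) : ℝ :=
  if G.Adj u v ∧ u ∈ B ∧ v ∉ B then (closedDegIn G B u : ℝ) / (deg G u : ℝ) else 0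

/-- Given per-ordered-pair forcing probabilities `q u v` (each attempt independent), the
probability that one round starting from the blue set `B` produces exactly the blue set `B'`. -/
noncomputable def stepOfQ (q : V → V → ℝ) (B B' : Finset V) : ℝ :=
  if B ⊆ B' then
    (∏ v ∈ B' \ B, (1 - ∏ u ∈ B, (1 - q u v))) * ∏ v ∈ B'ᶜ, ∏ u ∈ B, (1 - q u v)
  else 0

/-- The transition rule of standard probabilistic zero forcing, as a function of the history
(the list of blue sets so far; only the current blue set matters). -/
noncomputable def stdStep (G : SimpleGraph V) (hist : List (Finset V)) (B' : Finset V) : ℝ :=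
  stepOfQ (edgeForceProb G (hist.getLastD ∅)) (hist.getLastD ∅) B'

/-- Probability of a given future trajectory, given the history so far. -/
noncomputable def seqProbAux (step : List (Finset V) → Finset V → ℝ) :
    List (Finset V) → List (Finset V) → ℝ
  | _, [] => 1
  | hist, B :: rest => step hist B * seqProbAux step (hist ++ [B]) rest

/-- The probability that, running the process given by the transition rule `step` from the
initial blue set `S` for `ℓ` rounds, the resulting trajectory (including the initial set)
satisfies the predicate `E`. -/
noncomputable def trajEventProb (step : List (Finset V) → Finset V → ℝ) (S : Finset V)
    (ℓ : ℕ) (E : List (Finset V) → Prop) : ℝ :=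
  ∑ f : Fin ℓ → Finset V,
    if E (S :: List.ofFn f) then seqProbAux step [S] (List.ofFn f) else 0

/-- `P(A(S,T,ℓ))`: the probability that, starting probabilistic zero forcing from the blue
set `S`, after `ℓ` rounds every vertex of `T` is blue. -/
noncomputable def probForced (G : SimpleGraph V) (S T : Finset V) (ℓ : ℕ) : ℝ :=
  trajEventProb (stdStep G) S ℓ fun traj => T ⊆ traj.getLastD ∅

/-- `P(pt_pzf(G,S) ≤ ℓ)`: the probability that all vertices are blue after `ℓ` rounds. -/
noncomputable def probAllBlue (G : SimpleGraph V) (S : Finset V) (ℓ : ℕ) : ℝ :=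
  probForced G S Finset.univ ℓ

/-- The probability of a fixed graph `G` under the Erdős–Rényi measure `G(n,p)`. -/
noncomputable def erProb (n : ℕ) (p : ℝ) (G : SimpleGraph (Fin n)) : ℝ :=
  p ^ G.edgeSet.ncard * (1 - p) ^ (n.choose 2 - G.edgeSet.ncard)

/-- The probability that `G(n,p)` satisfies the property `E`. -/
noncomputable def graphProb (n : ℕ) (p : ℝ) (E : SimpleGraph (Fin n) → Prop) : ℝ :=
  ∑ G : SimpleGraph (Fin n), if E G then erProb n p G else 0

/-- `P(pt_pzf(G(n,p), v) ≤ ℓ)`: the joint probability (over the random graph and the forcing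
randomness) that probabilistic zero forcing started at `{v}` turns all of `G(n,p)` blue
within `ℓ` rounds. -/
noncomputable def prPZFwithin (n : ℕ) (p : ℝ) (v : Fin n) (ℓ : ℕ) : ℝ :=
  ∑ G : SimpleGraph (Fin n), erProb n p G * probAllBlue G {v} ℓ

end PZF

/-!
Induction on `ℓ`. After one round from the blue set `B`, the vertices are blue independently,
`v` with probability `1` if `v ∈ B` and `1 - ∏ u ∈ B, (1 - q u v)` otherwise, where
`q u v = |N[u] ∩ B| / deg u` grows with `B` for white `v`; so enlarging `B` raises each of these
probabilities. `P(A(B, T, ℓ + 1))` is the expectation of `B' ↦ P(A(B', T, ℓ))`, monotone by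
induction, over the blue set `B'` after that round, and for independent inclusions the
expectation of a monotone function is monotone in the inclusion probabilities.
-/

namespace Finset

variable {α R : Type*} [DecidableEq α] [CommRing R]

/-- The expectation of `f A` for the random subset `A ⊆ s` that contains each `a ∈ s`
independently with probability `p a`. -/
def bernoulliExpect (p : α → R) (s : Finset α) (f : Finset α → R) : R :=
  ∑ A ∈ s.powerset, ((∏ a ∈ A, p a) * ∏ a ∈ s \ A, (1 - p a)) * f A

theorem bernoulliExpect_insert {p : α → R} {s : Finset α} {a : α} (ha : a ∉ s)
    (f : Finset α → R) :
    bernoulliExpect p (insert a s) f =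
      (1 - p a) * bernoulliExpect p s f + p a * bernoulliExpect p s (fun A => f (insert a A)) := by
  unfold bernoulliExpect
  rw [sum_powerset_insert ha, mul_sum, mul_sum]
  congr 1 <;> refine sum_congr rfl fun A hA => ?_
  · have haA : a ∉ s \ A := fun h => ha (mem_sdiff.mp h).1
    rw [insert_sdiff_of_notMem _ (fun h => ha (mem_powerset.mp hA h)), prod_insert haA]
    ring
  · rw [prod_insert (fun h => ha (mem_powerset.mp hA h)), insert_sdiff_insert,
      sdiff_insert_of_notMem ha]
    ring

variable [LinearOrder R] [IsStrictOrderedRing R]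

theorem bernoulliExpect_mono_right {p : α → R} {s : Finset α} {f g : Finset α → R}
    (hp : ∀ a ∈ s, p a ∈ Set.Icc 0 1) (hfg : ∀ A ⊆ s, f A ≤ g A) :
    bernoulliExpect p s f ≤ bernoulliExpect p s g := by
  refine sum_le_sum fun A hA => mul_le_mul_of_nonneg_left (hfg A (mem_powerset.mp hA)) ?_
  have hA := mem_powerset.mp hA
  exact mul_nonneg (prod_nonneg fun a ha => (hp a (hA ha)).1)
    (prod_nonneg fun a ha => sub_nonneg.mpr (hp a (mem_sdiff.mp ha).1).2)

theorem bernoulliExpect_mono_left {p q : α → R} {s : Finset α} {f : Finset α → R}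
    (hf : Monotone f) (hp : ∀ a ∈ s, p a ∈ Set.Icc 0 1)
    (hq : ∀ a ∈ s, q a ∈ Set.Icc 0 1) (hpq : ∀ a ∈ s, p a ≤ q a) :
    bernoulliExpect p s f ≤ bernoulliExpect q s f := by
  induction s using Finset.induction_on generalizing f with
  | empty => rfl
  | insert a s ha ih =>
    have hp' := fun b hb => hp b (mem_insert_of_mem hb)
    have hq' := fun b hb => hq b (mem_insert_of_mem hb)
    have hpq' := fun b hb => hpq b (mem_insert_of_mem hb)
    have hfa : Monotone fun A => f (insert a A) := fun A B h => hf (insert_subset_insert a h)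
    have hX := ih hf hp' hq' hpq'
    have hY := ih hfa hp' hq' hpq'
    have hXY : bernoulliExpect q s f ≤ bernoulliExpect q s fun A => f (insert a A) :=
      bernoulliExpect_mono_right hq' fun A _ => hf (subset_insert a A)
    obtain ⟨hpa₀, hpa₁⟩ := hp a (mem_insert_self a s)
    have hpqa := hpq a (mem_insert_self a s)
    rw [bernoulliExpect_insert ha, bernoulliExpect_insert ha]
    nlinarith

end Finset

namespace PZF

variable {V : Type*}

theorem closedDegIn_le_deg [Finite V] {G : SimpleGraph V} {B : Finset V} {u v : V}
    (huv : G.Adj u v) (hv : v ∉ B) : closedDegIn G B u ≤ deg G u := by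
  have hsub : insert u (G.neighborSet u) ∩ (B : Set V) ⊆ insert u (G.neighborSet u \ {v}) := by
    rintro x ⟨rfl | hx, hxB⟩
    · exact Set.mem_insert x _
    · exact Set.mem_insert_of_mem u ⟨hx, fun h => hv (h ▸ hxB)⟩
  calc closedDegIn G B u
      ≤ (insert u (G.neighborSet u \ {v})).ncard := Set.ncard_le_ncard hsub (Set.toFinite _)
    _ ≤ (G.neighborSet u \ {v}).ncard + 1 := Set.ncard_insert_le _ _
    _ = deg G u := Set.ncard_sdiff_singleton_add_one (show v ∈ G.neighborSet u from huv)

variable [DecidableEq V]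

noncomputable def roundBlueProb (q : V → V → ℝ) (B : Finset V) (v : V) : ℝ :=
  if v ∈ B then 1 else 1 - ∏ u ∈ B, (1 - q u v)

theorem roundBlueProb_mem_Icc {q : V → V → ℝ} {B : Finset V}
    (hq : ∀ u v, q u v ∈ Set.Icc 0 1) (v : V) : roundBlueProb q B v ∈ Set.Icc 0 1 := by
  unfold roundBlueProb
  split_ifs
  · exact ⟨zero_le_one, le_rfl⟩
  · have h₀ : 0 ≤ ∏ u ∈ B, (1 - q u v) := prod_nonneg fun u _ => sub_nonneg.mpr (hq u v).2
    have h₁ : ∏ u ∈ B, (1 - q u v) ≤ 1 :=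
      prod_le_one (fun u _ => sub_nonneg.mpr (hq u v).2) fun u _ => by linarith [(hq u v).1]
    constructor <;> linarith

theorem edgeForceProb_mem_Icc [Finite V] (G : SimpleGraph V) (B : Finset V) (u v : V) :
    edgeForceProb G B u v ∈ Set.Icc 0 1 := by
  unfold edgeForceProb
  split_ifs with h
  · obtain ⟨huv, -, hv⟩ := h
    refine ⟨by positivity, div_le_one_of_le₀ ?_ (Nat.cast_nonneg _)⟩
    exact_mod_cast closedDegIn_le_deg huv hv
  · exact ⟨le_rfl, zero_le_one⟩

theorem edgeForceProb_mono [Finite V] {G : SimpleGraph V} {B₁ B₂ : Finset V} (h : B₁ ⊆ B₂)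
    {u v : V} (hv : v ∉ B₂) : edgeForceProb G B₁ u v ≤ edgeForceProb G B₂ u v := by
  unfold edgeForceProb
  split_ifs with h₁ h₂
  · have hcd : closedDegIn G B₁ u ≤ closedDegIn G B₂ u :=
      Set.ncard_le_ncard (Set.inter_subset_inter_right _ (by exact_mod_cast h)) (Set.toFinite _)
    gcongr
  · exact absurd ⟨h₁.1, h h₁.2.1, hv⟩ h₂
  · positivity
  · exact le_rfl

theorem roundBlueProb_edgeForceProb_mono [Finite V] {G : SimpleGraph V} {B₁ B₂ : Finset V}
    (h : B₁ ⊆ B₂) (v : V) :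
    roundBlueProb (edgeForceProb G B₁) B₁ v ≤
      roundBlueProb (edgeForceProb G B₂) B₂ v := by
  by_cases hv₂ : v ∈ B₂
  · exact (roundBlueProb_mem_Icc (edgeForceProb_mem_Icc G B₁) v).2.trans_eq (if_pos hv₂).symm
  have hv₁ : v ∉ B₁ := fun hv => hv₂ (h hv)
  have hq := edgeForceProb_mem_Icc G B₂
  rw [roundBlueProb, roundBlueProb, if_neg hv₁, if_neg hv₂, sub_le_sub_iff_left]
  calc ∏ u ∈ B₂, (1 - edgeForceProb G B₂ u v)
      ≤ ∏ u ∈ B₁, (1 - edgeForceProb G B₂ u v) :=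
        prod_le_prod_of_subset_of_le_one h (fun u _ => sub_nonneg.mpr (hq u v).2)
          fun u _ _ => by linarith [(hq u v).1]
    _ ≤ ∏ u ∈ B₁, (1 - edgeForceProb G B₁ u v) :=
        prod_le_prod (fun u _ => sub_nonneg.mpr (hq u v).2)
          fun u _ => sub_le_sub_left (edgeForceProb_mono h hv₂) 1

variable [Fintype V]

theorem sum_stepOfQ_mul (q : V → V → ℝ) (B : Finset V) (f : Finset V → ℝ) :
    ∑ B', stepOfQ q B B' * f B' = bernoulliExpect (roundBlueProb q B) univ f := by
  unfold bernoulliExpect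
  rw [powerset_univ]
  refine sum_congr rfl fun A _ => ?_
  unfold stepOfQ
  split_ifs with hBA
  · have hB : ∏ v ∈ B, roundBlueProb q B v = 1 :=
      prod_eq_one fun v hv => if_pos hv
    have hAB : ∏ v ∈ A \ B, roundBlueProb q B v =
        ∏ v ∈ A \ B, (1 - ∏ u ∈ B, (1 - q u v)) :=
      prod_congr rfl fun v hv => if_neg (mem_sdiff.mp hv).2
    have hAc : ∏ v ∈ univ \ A, (1 - roundBlueProb q B v) =
        ∏ v ∈ Aᶜ, ∏ u ∈ B, (1 - q u v) := by
      rw [← compl_eq_univ_sdiff]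
      refine prod_congr rfl fun v hv => ?_
      rw [roundBlueProb, if_neg fun h => mem_compl.mp hv (hBA h)]
      ring
    rw [← prod_sdiff hBA, hB, hAB, hAc, mul_one]
  · obtain ⟨v, hvB, hvA⟩ := not_subset.mp hBA
    have hA : ∏ v ∈ univ \ A, (1 - roundBlueProb q B v) = 0 :=
      prod_eq_zero (mem_sdiff.mpr ⟨mem_univ v, hvA⟩)
        (by rw [roundBlueProb, if_pos hvB, sub_self])
    rw [hA, mul_zero, zero_mul]

theorem seqProbAux_stdStep (G : SimpleGraph V) (l hist : List (Finset V)) :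
    seqProbAux (stdStep G) hist l = seqProbAux (stdStep G) [hist.getLastD ∅] l := by
  induction l generalizing hist with
  | nil => rfl
  | cons B rest ih =>
    simp only [seqProbAux, stdStep, List.getLastD_cons, List.getLastD_nil]
    rw [ih, ih ([_] ++ [B]), List.getLastD_concat, List.getLastD_concat]

theorem probForced_zero (G : SimpleGraph V) (S T : Finset V) :
    probForced G S T 0 = if T ⊆ S then 1 else 0 := by
  simp [probForced, trajEventProb, seqProbAux]

theorem probForced_succ (G : SimpleGraph V) (S T : Finset V) (ℓ : ℕ) :
    probForced G S T (ℓ + 1) =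
      ∑ B, stepOfQ (edgeForceProb G S) S B * probForced G B T ℓ := by
  unfold probForced trajEventProb
  rw [← (Fin.consEquiv fun _ => Finset V).sum_comp, Fintype.sum_prod_type]
  refine sum_congr rfl fun B _ => ?_
  rw [mul_sum]
  refine sum_congr rfl fun g _ => ?_
  simp only [Fin.consEquiv, Equiv.coe_fn_mk, List.ofFn_succ, Fin.cons_zero, Fin.cons_succ,
    List.getLastD_cons, List.getLastD_nil, seqProbAux, stdStep, mul_ite, mul_zero]
  rw [seqProbAux_stdStep G _ ([S] ++ [B]), List.getLastD_concat]

end PZF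

/-- **monotone coupling.**  For every graph `G`, all sets `S₁ ⊆ S₂ ⊆ V(G)`,
every `T ⊆ V(G)` and every `ℓ ∈ ℕ`, `P(A(S₁, T, ℓ)) ≤ P(A(S₂, T, ℓ))`, where `A(S, T, ℓ)` is
the event that starting probabilistic zero forcing with blue set `S`, after `ℓ` rounds every
vertex of `T` is blue. -/
theorem probForced_mono {V : Type*} [Fintype V] [DecidableEq V] (G : SimpleGraph V)
    (S₁ S₂ T : Finset V) (hS : S₁ ⊆ S₂) (ℓ : ℕ) :
    PZF.probForced G S₁ T ℓ ≤ PZF.probForced G S₂ T ℓ := by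
  induction ℓ generalizing S₁ S₂ with
  | zero =>
    rw [PZF.probForced_zero, PZF.probForced_zero]
    split_ifs with h₁ h₂
    · exact le_rfl
    · exact absurd (h₁.trans hS) h₂
    · exact zero_le_one
    · exact le_rfl
  | succ ℓ ih =>
    rw [PZF.probForced_succ, PZF.probForced_succ, PZF.sum_stepOfQ_mul, PZF.sum_stepOfQ_mul]
    exact Finset.bernoulliExpect_mono_left ih
      (fun v _ => PZF.roundBlueProb_mem_Icc (PZF.edgeForceProb_mem_Icc G S₁) v)
      (fun v _ => PZF.roundBlueProb_mem_Icc (PZF.edgeForceProb_mem_Icc G S₂) v)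
      (fun v _ => PZF.roundBlueProb_edgeForceProb_mono hS v)
end

section
/- Consider G(n,p) on vertex set V with Y₀ = {u₁, …, u_k} ⊆ V initially blue, where the edges within Y₀ are exposed and conditioned upon, and one round of the modified forcing rule is performed in which each u ∈ Y₀ independently forces each white neighbor with probability min{1, deg_{Y₀}[u]/d̃_L}. For each u ∈ Y₀, let Y₁(u) denote the set of vertices of V ∖ Y₀ forced by u in this round. Then for any subsets S_{u₁}, …, S_{u_k} ⊆ V ∖ Y₀, for each u ∈ Y₀ and each v ∈ V ∖ (Y₀ ∪ S_u), the conditional probability satisfies P( {u,v} ∈ E(G(n,p)) | ⋂_{j=1}^{k} {Y₁(u_j) = S_{u_j}} ) ≤ p. -/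
/-!
Let `C` be the event `⋂_{w ∈ Y₀} {Y₁(w) = S_w}`. Switching off the edge `uv` maps `{uv ∈ E} ∩ C`
injectively into `{uv ∉ E} ∩ C`: on `C` the coin of the attempt `u → v` failed (as `v ∉ S_u`),
and no other attempt uses `uv`, so no `Y₁(w)` changes; meanwhile the weight of a configuration
is multiplied by `(1 - p) / p`. Hence `(1 - p) P(uv ∈ E, C) ≤ p P(uv ∉ E, C)`, which is
`P(uv ∈ E, C) ≤ p P(C)`.
-/

open Finset Filter Real
open scoped Classical

namespace PZF

variable {V : Type*} [Fintype V] [DecidableEq V]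

/-- Sample space for one round of the modified forcing rule on `G(n,p)` : a configuration of
potential edges together with a configuration of forcing coins for each ordered pair. -/
abbrev Omega (n : ℕ) := (Sym2 (Fin n) → Bool) × (Fin n × Fin n → Bool)

/-- Bernoulli weight. -/
noncomputable def bern (r : ℝ) (b : Bool) : ℝ := if b then r else 1 - r

/-- The modified forcing probability `min {1, deg_{Y₀}[u] / d̃_L}`, where the closed degree of
`u` into `Y₀` is computed in the exposed (conditioned) graph `H` of edges within `Y₀`. -/
noncomputable def forceP (n : ℕ) (dL : ℝ) (H : SimpleGraph (Fin n)) (Y₀ : Finset (Fin n))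
    (u : Fin n) : ℝ :=
  min 1 ((closedDegIn H Y₀ u : ℝ) / dL)

/-- The weight of a configuration: each potential edge appears independently with probability
`p`, and the forcing coin of a pair `(u, v)` with `u ∈ Y₀`, `v ∉ Y₀` succeeds independently
with probability `min {1, deg_{Y₀}[u] / d̃_L}` (the remaining coins are unused randomness). -/
noncomputable def wt (n : ℕ) (p dL : ℝ) (H : SimpleGraph (Fin n)) (Y₀ : Finset (Fin n))
    (ω : Omega n) : ℝ :=
  (∏ e : Sym2 (Fin n), bern p (ω.1 e)) *
    ∏ x : Fin n × Fin n,
      bern (if x.1 ∈ Y₀ ∧ x.2 ∉ Y₀ then forceP n dL H Y₀ x.1 else p) (ω.2 x)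

/-- Probability of an event, conditionally on the exposed edges within `Y₀` (recorded in `H`). -/
noncomputable def Pr (n : ℕ) (p dL : ℝ) (H : SimpleGraph (Fin n)) (Y₀ : Finset (Fin n))
    (E : Omega n → Prop) : ℝ :=
  ∑ ω : Omega n, if E ω then wt n p dL H Y₀ ω else 0

/-- `Y₁(u)`: the set of vertices of `V \\ Y₀` forced by `u` in this round, namely the white
vertices `v` joined to `u` by an edge whose forcing coin succeeded. -/
noncomputable def Y1 (n : ℕ) (Y₀ : Finset (Fin n)) (u : Fin n) (ω : Omega n) : Finset (Fin n) :=
  Finset.univ.filter fun v => v ∉ Y₀ ∧ ω.1 s(u, v) = true ∧ ω.2 (u, v) = true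

end PZF

theorem Finset.sum_comp_le_sum_of_injOn {ι κ M : Type*} [AddCommMonoid M] [Preorder M]
    [AddLeftMono M] [DecidableEq κ] {s : Finset ι} {t : Finset κ} {f : ι → κ} (g : κ → M)
    (hf : Set.MapsTo f s t) (hinj : Set.InjOn f s) (hg : ∀ j ∈ t, 0 ≤ g j) :
    ∑ i ∈ s, g (f i) ≤ ∑ j ∈ t, g j := by
  rw [← Finset.sum_image hinj]
  exact Finset.sum_le_sum_of_subset_of_nonneg (Finset.image_subset_iff.mpr hf)
    fun j hj _ => hg j hj

namespace PZF

theorem bern_nonneg {r : ℝ} (h0 : 0 ≤ r) (h1 : r ≤ 1) (b : Bool) : 0 ≤ bern r b := by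
  cases b <;> simp only [bern, Bool.false_eq_true, if_false, if_true] <;> linarith

theorem forceP_nonneg {n : ℕ} {dL : ℝ} (hdL : 0 ≤ dL) (H : SimpleGraph (Fin n))
    (Y₀ : Finset (Fin n)) (u : Fin n) : 0 ≤ forceP n dL H Y₀ u :=
  le_min zero_le_one (div_nonneg (Nat.cast_nonneg _) hdL)

theorem wt_nonneg {n : ℕ} {p dL : ℝ} (hp0 : 0 ≤ p) (hp1 : p ≤ 1) (hdL : 0 ≤ dL)
    (H : SimpleGraph (Fin n)) (Y₀ : Finset (Fin n)) (ω : Omega n) :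
    0 ≤ wt n p dL H Y₀ ω := by
  refine mul_nonneg (Finset.prod_nonneg fun e _ => bern_nonneg hp0 hp1 _)
    (Finset.prod_nonneg fun x _ => ?_)
  split_ifs
  · exact bern_nonneg (forceP_nonneg hdL H Y₀ x.1) (min_le_left _ _) _
  · exact bern_nonneg hp0 hp1 _

theorem Pr_nonneg {n : ℕ} {p dL : ℝ} (hp0 : 0 ≤ p) (hp1 : p ≤ 1) (hdL : 0 ≤ dL)
    (H : SimpleGraph (Fin n)) (Y₀ : Finset (Fin n)) (E : Omega n → Prop) :
    0 ≤ Pr n p dL H Y₀ E :=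
  Finset.sum_nonneg fun ω _ => by
    split_ifs
    exacts [wt_nonneg hp0 hp1 hdL H Y₀ ω, le_rfl]

theorem Pr_eq_sum_filter (n : ℕ) (p dL : ℝ) (H : SimpleGraph (Fin n)) (Y₀ : Finset (Fin n))
    (E : Omega n → Prop) [DecidablePred E] :
    Pr n p dL H Y₀ E = ∑ ω ∈ Finset.univ.filter E, wt n p dL H Y₀ ω := by
  rw [Finset.sum_filter, Pr]
  congr!

theorem Pr_eq_Pr_and_add_Pr_not_and (n : ℕ) (p dL : ℝ) (H : SimpleGraph (Fin n))
    (Y₀ : Finset (Fin n)) (X E : Omega n → Prop) :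
    Pr n p dL H Y₀ E =
      Pr n p dL H Y₀ (fun ω => X ω ∧ E ω) + Pr n p dL H Y₀ (fun ω => ¬X ω ∧ E ω) := by
  simp only [Pr, ← Finset.sum_add_distrib]
  refine Finset.sum_congr rfl fun ω _ => ?_
  by_cases hX : X ω <;> simp [hX]

def removeEdge {n : ℕ} (e : Sym2 (Fin n)) (ω : Omega n) : Omega n :=
  (Function.update ω.1 e false, ω.2)

theorem removeEdge_injOn {n : ℕ} (e : Sym2 (Fin n)) :
    Set.InjOn (removeEdge e) {ω | ω.1 e = true} := by
  intro ω hω ω' hω' h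
  refine Prod.ext (funext fun e' => ?_) (congrArg Prod.snd h :)
  by_cases he : e' = e
  · subst he
    exact hω.trans hω'.symm
  · simpa [removeEdge, Function.update_of_ne he] using congrFun (congrArg Prod.fst h) e'

theorem one_sub_mul_wt_eq_mul_wt_removeEdge {n : ℕ} (p dL : ℝ) (H : SimpleGraph (Fin n))
    (Y₀ : Finset (Fin n)) {e : Sym2 (Fin n)} {ω : Omega n} (he : ω.1 e = true) :
    (1 - p) * wt n p dL H Y₀ ω = p * wt n p dL H Y₀ (removeEdge e ω) := by
  have hsplit : ∀ ω' : Omega n, ∏ e', bern p (ω'.1 e') =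
      bern p (ω'.1 e) * ∏ e' ∈ Finset.univ.erase e, bern p (ω'.1 e') := fun ω' =>
    (Finset.mul_prod_erase _ _ (Finset.mem_univ e)).symm
  have hrest : ∏ e' ∈ Finset.univ.erase e, bern p ((removeEdge e ω).1 e') =
      ∏ e' ∈ Finset.univ.erase e, bern p (ω.1 e') :=
    Finset.prod_congr rfl fun e' he' => by
      simp only [removeEdge, Function.update_of_ne (Finset.ne_of_mem_erase he')]
  have hoff : (removeEdge e ω).1 e = false := Function.update_self ..
  have htrue : bern p true = p := if_pos rfl
  have hfalse : bern p false = 1 - p := if_neg Bool.false_ne_true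
  rw [wt, wt, hsplit ω, hsplit (removeEdge e ω), hrest, hoff, he, htrue, hfalse]
  simp only [removeEdge]
  ring

theorem Y1_removeEdge {n : ℕ} {Y₀ : Finset (Fin n)} {u v w : Fin n} {ω : Omega n}
    (hv : v ∉ Y₀) (hw : w ∈ Y₀) (hvY1 : v ∉ Y1 n Y₀ u ω) :
    Y1 n Y₀ w (removeEdge s(u, v) ω) = Y1 n Y₀ w ω := by
  ext x
  simp only [Y1, Finset.mem_filter, Finset.mem_univ, true_and] at hvY1 ⊢
  by_cases hwx : s(w, x) = s(u, v)
  · obtain ⟨rfl, rfl⟩ : w = u ∧ x = v := by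
      rcases Sym2.eq_iff.mp hwx with h | ⟨rfl, -⟩
      · exact h
      · exact absurd hw hv
    simpa [removeEdge] using hvY1
  · simp only [removeEdge, Function.update_of_ne hwx]

theorem one_sub_mul_Pr_le_mul_Pr_removeEdge {n : ℕ} {p dL : ℝ} (hp0 : 0 ≤ p) (hp1 : p ≤ 1)
    (hdL : 0 ≤ dL) (H : SimpleGraph (Fin n)) (Y₀ : Finset (Fin n)) (e : Sym2 (Fin n))
    {E F : Omega n → Prop} (hEF : ∀ ω, ω.1 e = true → E ω → F (removeEdge e ω)) :
    (1 - p) * Pr n p dL H Y₀ (fun ω => ω.1 e = true ∧ E ω) ≤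
      p * Pr n p dL H Y₀ (fun ω => ¬ω.1 e = true ∧ F ω) := by
  rw [Pr_eq_sum_filter, Pr_eq_sum_filter, Finset.mul_sum, Finset.mul_sum]
  refine (Finset.sum_congr rfl fun ω hω => ?shift).trans_le
    (Finset.sum_comp_le_sum_of_injOn (f := removeEdge e) (fun ω => p * wt n p dL H Y₀ ω)
      ?maps ?inj fun ω _ => mul_nonneg hp0 (wt_nonneg hp0 hp1 hdL H Y₀ ω))
  case shift =>
    exact one_sub_mul_wt_eq_mul_wt_removeEdge p dL H Y₀ (Finset.mem_filter.mp hω).2.1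
  case maps =>
    intro ω hω
    obtain ⟨he, hE⟩ := (Finset.mem_filter.mp hω).2
    simpa [removeEdge] using hEF ω he hE
  case inj =>
    exact (removeEdge_injOn e).mono fun ω hω => (Finset.mem_filter.mp hω).2.1

end PZF

theorem edge_prob_conditional_bound_general
    (n : ℕ) (p dL : ℝ) (hp0 : 0 ≤ p) (hp1 : p ≤ 1) (hdL : 0 < dL)
    (H : SimpleGraph (Fin n)) (Y₀ : Finset (Fin n))
    (S : Fin n → Finset (Fin n))
    (u v : Fin n) (hu : u ∈ Y₀) (hv : v ∉ Y₀) (hvS : v ∉ S u) :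
    PZF.Pr n p dL H Y₀
        (fun ω => ω.1 s(u, v) = true ∧ ∀ w ∈ Y₀, PZF.Y1 n Y₀ w ω = S w) /
      PZF.Pr n p dL H Y₀ (fun ω => ∀ w ∈ Y₀, PZF.Y1 n Y₀ w ω = S w) ≤ p := by
  set E : PZF.Omega n → Prop := fun ω => ∀ w ∈ Y₀, PZF.Y1 n Y₀ w ω = S w
  have hE : ∀ ω, ω.1 s(u, v) = true → E ω → E (PZF.removeEdge s(u, v) ω) := by
    intro ω _ hω w hw
    have hvY1 : v ∉ PZF.Y1 n Y₀ u ω := hω u hu ▸ hvS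
    exact (PZF.Y1_removeEdge hv hw hvY1).trans (hω w hw)
  have hshift := PZF.one_sub_mul_Pr_le_mul_Pr_removeEdge hp0 hp1 hdL.le H Y₀ s(u, v) hE
  rw [PZF.Pr_eq_Pr_and_add_Pr_not_and n p dL H Y₀ (fun ω => ω.1 s(u, v) = true) E]
  have hA := PZF.Pr_nonneg hp0 hp1 hdL.le H Y₀ (fun ω => ω.1 s(u, v) = true ∧ E ω)
  have hB := PZF.Pr_nonneg hp0 hp1 hdL.le H Y₀ (fun ω => ¬ω.1 s(u, v) = true ∧ E ω)
  exact div_le_of_le_mul₀ (add_nonneg hA hB) hp0 (by linarith)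

/-- With `Y₀` initially blue, the edges within `Y₀` exposed (recorded in
`H`) and one round of the modified forcing rule performed, for any prescribed outcomes
`S u = Y₁(u)` for the blue vertices `u ∈ Y₀`, any `u ∈ Y₀` and any `v ∉ Y₀ ∪ S u`, the
conditional probability that `{u, v}` is an edge of `G(n,p)` given `⋂_{u ∈ Y₀} {Y₁(u) = S u}`
is at most `p`. -/
theorem edge_prob_conditional_bound
    (n : ℕ) (p dL : ℝ) (hp0 : 0 ≤ p) (hp1 : p ≤ 1) (hdL : 0 < dL)
    (H : SimpleGraph (Fin n)) (Y₀ : Finset (Fin n))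
    (S : Fin n → Finset (Fin n)) (hS : ∀ u ∈ Y₀, ∀ w ∈ S u, w ∉ Y₀)
    (u v : Fin n) (hu : u ∈ Y₀) (hv : v ∉ Y₀) (hvS : v ∉ S u) :
    PZF.Pr n p dL H Y₀
        (fun ω => ω.1 s(u, v) = true ∧ ∀ w ∈ Y₀, PZF.Y1 n Y₀ w ω = S w) /
      PZF.Pr n p dL H Y₀ (fun ω => ∀ w ∈ Y₀, PZF.Y1 n Y₀ w ω = S w) ≤ p :=
  edge_prob_conditional_bound_general n p dL hp0 hp1 hdL H Y₀ S u v hu hv hvS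
end

section
/- Consider G(n,p) on vertex set V with Y₀ = {u₁, …, u_k} ⊆ V initially blue, where the edges within Y₀ are exposed and conditioned upon, and one round of the modified forcing rule is performed in which each u ∈ Y₀ independently forces each white neighbor with probability min{1, deg_{Y₀}[u]/d̃_L}. For each u ∈ Y₀, let Y₁(u) denote the set of vertices of V ∖ Y₀ forced by u in this round. Then for any subsets S_{u₁}, …, S_{u_k} ⊆ V ∖ Y₀, the indicator random variables {1[{u,v} ∈ E(G(n,p))]} indexed by u ∈ Y₀ and v ∈ V ∖ (Y₀ ∪ S_u) are conditionally independent given the event ⋂_{j=1}^{k} {Y₁(u_j) = S_{u_j}}. -/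
open Finset Filter Real
open scoped Classical

section Aux

open PZF

variable {n : ℕ}

private lemma prod_apply_update {ι α : Type*} [Fintype ι] [DecidableEq ι]
    (F : ι → α → ℝ) (g : ι → α) (i : ι) (c : α) :
    ∏ z, F z (Function.update g i c z) =
      F i c * ∏ z ∈ Finset.univ.erase i, F z (g z) := by
  rw [← Finset.mul_prod_erase Finset.univ (fun z => F z (Function.update g i c z))
      (Finset.mem_univ i), Function.update_self]
  congr 1
  exact Finset.prod_congr rfl fun z hz => by
    rw [Function.update_of_ne (Finset.ne_of_mem_erase hz)]

private lemma prod_apply_split {ι α : Type*} [Fintype ι] [DecidableEq ι]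
    (F : ι → α → ℝ) (g : ι → α) (i : ι) :
    ∏ z, F z (g z) = F i (g i) * ∏ z ∈ Finset.univ.erase i, F z (g z) :=
  (Finset.mul_prod_erase _ _ (Finset.mem_univ i)).symm

private lemma prod_mul_prod_update {ι α : Type*} [Fintype ι] [DecidableEq ι]
    (F : ι → α → ℝ) (g g' : ι → α) (i : ι) :
    (∏ z, F z (Function.update g i (g' i) z)) * ∏ z, F z (Function.update g' i (g i) z) =
      (∏ z, F z (g z)) * ∏ z, F z (g' z) := by
  rw [prod_apply_update, prod_apply_update, prod_apply_split F g i, prod_apply_split F g' i]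
  ring

private lemma wt_swap (p dL : ℝ) (H : SimpleGraph (Fin n)) (Y₀ : Finset (Fin n))
    (e₀ : Sym2 (Fin n)) (x : Fin n × Fin n) (ω ω' : Omega n) :
    wt n p dL H Y₀ (Function.update ω.1 e₀ (ω'.1 e₀), Function.update ω.2 x (ω'.2 x)) *
      wt n p dL H Y₀ (Function.update ω'.1 e₀ (ω.1 e₀), Function.update ω'.2 x (ω.2 x)) =
    wt n p dL H Y₀ ω * wt n p dL H Y₀ ω' := by
  have h1 : (∏ e : Sym2 (Fin n), bern p (Function.update ω.1 e₀ (ω'.1 e₀) e)) *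
      (∏ e : Sym2 (Fin n), bern p (Function.update ω'.1 e₀ (ω.1 e₀) e)) =
      (∏ e : Sym2 (Fin n), bern p (ω.1 e)) * ∏ e : Sym2 (Fin n), bern p (ω'.1 e) :=
    prod_mul_prod_update (fun _ a => bern p a) ω.1 ω'.1 e₀
  have h2 : (∏ z : Fin n × Fin n,
        bern (if z.1 ∈ Y₀ ∧ z.2 ∉ Y₀ then forceP n dL H Y₀ z.1 else p)
          (Function.update ω.2 x (ω'.2 x) z)) *
      (∏ z : Fin n × Fin n,
        bern (if z.1 ∈ Y₀ ∧ z.2 ∉ Y₀ then forceP n dL H Y₀ z.1 else p)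
          (Function.update ω'.2 x (ω.2 x) z)) =
      (∏ z : Fin n × Fin n,
        bern (if z.1 ∈ Y₀ ∧ z.2 ∉ Y₀ then forceP n dL H Y₀ z.1 else p) (ω.2 z)) *
      ∏ z : Fin n × Fin n,
        bern (if z.1 ∈ Y₀ ∧ z.2 ∉ Y₀ then forceP n dL H Y₀ z.1 else p) (ω'.2 z) :=
    prod_mul_prod_update
      (fun z a => bern (if z.1 ∈ Y₀ ∧ z.2 ∉ Y₀ then forceP n dL H Y₀ z.1 else p) a) ω.2 ω'.2 x
  simp only [wt]
  rw [mul_mul_mul_comm, h1, h2, mul_mul_mul_comm]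

end Aux
section Aux2

open PZF

variable {n : ℕ}

/-- The per-pair condition of the event `Y₁(w) = S w`. -/
private def Cc (n : ℕ) (Y₀ : Finset (Fin n)) (S : Fin n → Finset (Fin n))
    (ω : Omega n) (w v : Fin n) : Prop :=
  (v ∉ Y₀ ∧ ω.1 s(w, v) = true ∧ ω.2 (w, v) = true) ↔ v ∈ S w

private def Dd (n : ℕ) (Y₀ : Finset (Fin n)) (S : Fin n → Finset (Fin n))
    (x : Fin n × Fin n) (ω : Omega n) : Prop :=
  ∀ w ∈ Y₀, ∀ v, (w, v) ≠ x → Cc n Y₀ S ω w v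

private lemma Bchar (Y₀ : Finset (Fin n)) (S : Fin n → Finset (Fin n)) (ω : Omega n) :
    (∀ w ∈ Y₀, Y1 n Y₀ w ω = S w) ↔ ∀ w ∈ Y₀, ∀ v, Cc n Y₀ S ω w v := by
  simp only [Y1, Finset.ext_iff, Finset.mem_filter, Finset.mem_univ, true_and, Cc]

private lemma Csplit {Y₀ : Finset (Fin n)} {S : Fin n → Finset (Fin n)}
    {x : Fin n × Fin n} (hx1 : x.1 ∈ Y₀) (ω : Omega n) :
    (∀ w ∈ Y₀, ∀ v, Cc n Y₀ S ω w v) ↔ Dd n Y₀ S x ω ∧ Cc n Y₀ S ω x.1 x.2 := by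
  constructor
  · intro h; exact ⟨fun w hw v _ => h w hw v, h x.1 hx1 x.2⟩
  · rintro ⟨h1, h2⟩ w hw v
    by_cases hx : (w, v) = x
    · rw [show w = x.1 from congrArg Prod.fst hx, show v = x.2 from congrArg Prod.snd hx]
      exact h2
    · exact h1 w hw v hx

private lemma Cc_update_ne {Y₀ : Finset (Fin n)} {S : Fin n → Finset (Fin n)}
    {x : Fin n × Fin n} {w v : Fin n} (hw : w ∈ Y₀) (hx2 : x.2 ∉ Y₀)
    (hne : (w, v) ≠ x) (c d : Bool) (ω : Omega n) :
    Cc n Y₀ S (Function.update ω.1 s(x.1, x.2) c, Function.update ω.2 x d) w v ↔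
      Cc n Y₀ S ω w v := by
  have h1 : s(w, v) ≠ s(x.1, x.2) := by
    intro h
    rcases Sym2.eq_iff.mp h with ⟨ha, hb⟩ | ⟨ha, hb⟩
    · exact hne (Prod.ext ha hb)
    · exact hx2 (ha ▸ hw)
  simp only [Cc, Function.update_of_ne h1, Function.update_of_ne hne]

private lemma Cc_update_eq {Y₀ : Finset (Fin n)} {S : Fin n → Finset (Fin n)}
    (x : Fin n × Fin n) (c d : Bool) (ω : Omega n) :
    Cc n Y₀ S (Function.update ω.1 s(x.1, x.2) c, Function.update ω.2 x d) x.1 x.2 ↔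
      ((x.2 ∉ Y₀ ∧ c = true ∧ d = true) ↔ x.2 ∈ S x.1) := by
  simp only [Cc, Prod.mk.eta, Function.update_self]

private lemma Bform {Y₀ : Finset (Fin n)} {S : Fin n → Finset (Fin n)}
    {x : Fin n × Fin n} (hx1 : x.1 ∈ Y₀) (ω : Omega n) :
    (∀ w ∈ Y₀, Y1 n Y₀ w ω = S w) ↔ Dd n Y₀ S x ω ∧ Cc n Y₀ S ω x.1 x.2 := by
  rw [Bchar, Csplit hx1]

private lemma Bform_upd {Y₀ : Finset (Fin n)} {S : Fin n → Finset (Fin n)}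
    {x : Fin n × Fin n} (hx1 : x.1 ∈ Y₀) (hx2 : x.2 ∉ Y₀) (ω ω' : Omega n) :
    (∀ w ∈ Y₀, Y1 n Y₀ w
        (Function.update ω.1 s(x.1, x.2) (ω'.1 s(x.1, x.2)),
          Function.update ω.2 x (ω'.2 x)) = S w) ↔
      Dd n Y₀ S x ω ∧ Cc n Y₀ S ω' x.1 x.2 := by
  rw [Bchar, Csplit hx1]
  apply and_congr
  · exact forall_congr' fun w => imp_congr_right fun hw => forall_congr' fun v =>
      imp_congr_right fun hne => Cc_update_ne hw hx2 hne _ _ ω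
  · rw [Cc_update_eq]
    unfold Cc
    rfl

end Aux2
section Aux3

open PZF

variable {n : ℕ}

private lemma Pr_congr {p dL : ℝ} {H : SimpleGraph (Fin n)} {Y₀ : Finset (Fin n)}
    {E E' : Omega n → Prop} (h : ∀ ω, E ω ↔ E' ω) :
    Pr n p dL H Y₀ E = Pr n p dL H Y₀ E' :=
  Finset.sum_congr rfl fun ω _ => by rw [if_congr (h ω) rfl rfl]

private lemma key_step (p dL : ℝ) (H : SimpleGraph (Fin n)) (Y₀ : Finset (Fin n))
    (S : Fin n → Finset (Fin n)) (F : Finset (Fin n × Fin n))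
    (hF : ∀ y ∈ F, y.1 ∈ Y₀ ∧ y.2 ∉ Y₀) (b : Fin n × Fin n → Bool)
    (x : Fin n × Fin n) (hxF : x ∈ F) :
    Pr n p dL H Y₀
        (fun ω => (∀ y ∈ F, ω.1 s(y.1, y.2) = b y) ∧ ∀ w ∈ Y₀, Y1 n Y₀ w ω = S w) *
      Pr n p dL H Y₀ (fun ω => ∀ w ∈ Y₀, Y1 n Y₀ w ω = S w) =
    Pr n p dL H Y₀
        (fun ω => (∀ y ∈ F.erase x, ω.1 s(y.1, y.2) = b y) ∧ ∀ w ∈ Y₀, Y1 n Y₀ w ω = S w) *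
      Pr n p dL H Y₀ (fun ω => ω.1 s(x.1, x.2) = b x ∧ ∀ w ∈ Y₀, Y1 n Y₀ w ω = S w) := by
  obtain ⟨hx1, hx2⟩ := hF x hxF
  have expand : ∀ E E' : Omega n → Prop,
      Pr n p dL H Y₀ E * Pr n p dL H Y₀ E' =
        ∑ ωp : Omega n × Omega n,
          if E ωp.1 ∧ E' ωp.2 then wt n p dL H Y₀ ωp.1 * wt n p dL H Y₀ ωp.2 else 0 := by
    intro E E'
    rw [Pr, Pr, Finset.sum_mul_sum]
    conv_rhs => rw [Fintype.sum_prod_type]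
    refine Finset.sum_congr rfl fun ω _ => Finset.sum_congr rfl fun ω' _ => ?_
    by_cases h1 : E ω <;> by_cases h2 : E' ω' <;> simp [h1, h2]
  rw [expand, expand]
  set e₀ : Sym2 (Fin n) := s(x.1, x.2) with he₀
  set T : Omega n × Omega n → Omega n × Omega n := fun ωp =>
    ((Function.update ωp.1.1 e₀ (ωp.2.1 e₀), Function.update ωp.1.2 x (ωp.2.2 x)),
     (Function.update ωp.2.1 e₀ (ωp.1.1 e₀), Function.update ωp.2.2 x (ωp.1.2 x))) with hTdef
  have hT : Function.Involutive T := by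
    rintro ⟨⟨a, c⟩, ⟨a', c'⟩⟩
    simp only [hTdef, Function.update_self, Function.update_idem, Function.update_eq_self]
  refine Fintype.sum_bijective T hT.bijective _ _ fun ωp => ?_
  obtain ⟨ω, ω'⟩ := ωp
  simp only [hTdef]
  refine if_congr ?_ (wt_swap p dL H Y₀ e₀ x ω ω').symm rfl
  have hErase : (∀ y ∈ F.erase x,
      Function.update ω.1 e₀ (ω'.1 e₀) s(y.1, y.2) = b y) ↔
      ∀ y ∈ F.erase x, ω.1 s(y.1, y.2) = b y := by
    refine forall_congr' fun y => imp_congr_right fun hy => ?_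
    have hyx : y ≠ x := Finset.ne_of_mem_erase hy
    have hy' := hF y (Finset.mem_of_mem_erase hy)
    have hne : s(y.1, y.2) ≠ e₀ := by
      rw [he₀]
      intro h
      rcases Sym2.eq_iff.mp h with ⟨ha, hb⟩ | ⟨ha, hb⟩
      · exact hyx (Prod.ext ha hb)
      · exact hx2 (ha ▸ hy'.1)
    rw [Function.update_of_ne hne]
  have hFsplit : (∀ y ∈ F, ω.1 s(y.1, y.2) = b y) ↔
      ((∀ y ∈ F.erase x, ω.1 s(y.1, y.2) = b y) ∧ ω.1 e₀ = b x) := by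
    constructor
    · intro h; exact ⟨fun y hy => h y (Finset.mem_of_mem_erase hy), h x hxF⟩
    · rintro ⟨h1, h2⟩ y hy
      by_cases hyx : y = x
      · subst hyx; exact h2
      · exact h1 y (Finset.mem_erase.mpr ⟨hyx, hy⟩)
  rw [hFsplit, hErase, Function.update_self,
    Bform (S := S) hx1 ω, Bform (S := S) hx1 ω',
    Bform_upd (S := S) hx1 hx2 ω ω', Bform_upd (S := S) hx1 hx2 ω' ω]
  tauto

end Aux3

/-- With `Y₀` initially blue, the edges within `Y₀` exposed (recorded in
`H`) and one round of the modified forcing rule performed, the indicator random variables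
`1[{u,v} ∈ E(G(n,p))]`, indexed by pairs `(u, v)` with `u ∈ Y₀` and `v ∉ Y₀ ∪ S u`, are
conditionally independent given the event `⋂_{u ∈ Y₀} {Y₁(u) = S u}`: for every finite
family of such pairs `F` and every assignment of values `b`, the conditional probability of
the intersection factors as the product of the individual conditional probabilities. -/
theorem edge_indicators_conditionally_independent
    (n : ℕ) (p dL : ℝ) (hp0 : 0 ≤ p) (hp1 : p ≤ 1) (hdL : 0 < dL)
    (H : SimpleGraph (Fin n)) (Y₀ : Finset (Fin n))
    (S : Fin n → Finset (Fin n)) (hS : ∀ u ∈ Y₀, ∀ w ∈ S u, w ∉ Y₀)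
    (hB : PZF.Pr n p dL H Y₀ (fun ω => ∀ w ∈ Y₀, PZF.Y1 n Y₀ w ω = S w) ≠ 0)
    (F : Finset (Fin n × Fin n))
    (hF : ∀ x ∈ F, x.1 ∈ Y₀ ∧ x.2 ∉ Y₀ ∧ x.2 ∉ S x.1)
    (b : Fin n × Fin n → Bool) :
    PZF.Pr n p dL H Y₀
        (fun ω => (∀ x ∈ F, ω.1 s(x.1, x.2) = b x) ∧ ∀ w ∈ Y₀, PZF.Y1 n Y₀ w ω = S w) /
      PZF.Pr n p dL H Y₀ (fun ω => ∀ w ∈ Y₀, PZF.Y1 n Y₀ w ω = S w) =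
    ∏ x ∈ F,
      PZF.Pr n p dL H Y₀
          (fun ω => ω.1 s(x.1, x.2) = b x ∧ ∀ w ∈ Y₀, PZF.Y1 n Y₀ w ω = S w) /
        PZF.Pr n p dL H Y₀ (fun ω => ∀ w ∈ Y₀, PZF.Y1 n Y₀ w ω = S w) := by
  classical
  revert hF
  induction F using Finset.induction_on with
  | empty =>
    intro _
    rw [Finset.prod_empty,
      Pr_congr (E' := fun ω => ∀ w ∈ Y₀, PZF.Y1 n Y₀ w ω = S w) (fun ω => by simp)]
    exact div_self hB
  | @insert a F' ha ih =>
    intro hF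
    have hF' : ∀ y ∈ F', y.1 ∈ Y₀ ∧ y.2 ∉ Y₀ ∧ y.2 ∉ S y.1 :=
      fun y hy => hF y (Finset.mem_insert_of_mem hy)
    have key := key_step p dL H Y₀ S (insert a F')
      (fun y hy => ⟨(hF y hy).1, (hF y hy).2.1⟩) b a (Finset.mem_insert_self a F')
    rw [Finset.erase_insert ha] at key
    rw [Finset.prod_insert ha, ← ih hF', div_mul_div_comm]
    rw [div_eq_div_iff hB (mul_ne_zero hB hB)]
    linear_combination
      PZF.Pr n p dL H Y₀ (fun ω => ∀ w ∈ Y₀, PZF.Y1 n Y₀ w ω = S w) * key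
end
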